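/- Let m ∈ ℕ, s ∈ {0,1,2}^{k_m−1} and n > m. Then for every gap G ∈ 𝒢^1_s(n), either l(G) ≥ l(G^1(s^2, n)), or l(G^1(s, n)) ≤ l(G) < r(G) ≤ r(G^0(s^2, n)). -/
import Mathlib


open Pointwise MeasureTheory

namespace CCS

/-- `dSeq a n` is the common length `d_n = ∏_{i=1}^n (1 - a_i)/2` of the intervals of the
`n`-th step of the construction of the central Cantor set `C(a)` (`d_0 = 1`).
The sequence `a` is indexed from `1`; the value `a 0` is irrelevant. -/
noncomputable def dSeq (a : ℕ → ℝ) (n : ℕ) : ℝ :=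
  ∏ i ∈ Finset.Icc 1 n, ((1 - a i) / 2)

/-- Left endpoint of the interval `I_t`, `t ∈ {0,1}^n` (coded as a list, the paper's
`t_j` being `t.getD (j-1) 0`): `l(I_t) = ∑_{j=1}^n t_j (d_{j-1} - d_j)`. -/
noncomputable def Il (a : ℕ → ℝ) (t : List ℕ) : ℝ :=
  ∑ j ∈ Finset.range t.length, (t.getD j 0 : ℝ) * (dSeq a j - dSeq a (j + 1))

/-- The `n`-th step `C_n(a)` of the construction of the central Cantor set:
the union of the intervals `I_t = [l(I_t), l(I_t) + d_n]` over `t ∈ {0,1}^n`. -/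
noncomputable def cantorStep (a : ℕ → ℝ) (n : ℕ) : Set ℝ :=
  ⋃ t ∈ {t : List ℕ | t.length = n ∧ ∀ j ∈ t, j ≤ 1},
    Set.Icc (Il a t) (Il a t + dSeq a n)

/-- The central Cantor set `C(a) = ⋂ₙ C_n(a)`. -/
noncomputable def cantorSet (a : ℕ → ℝ) : Set ℝ := ⋂ n, cantorStep a n

/-- Left endpoint of the interval `J_s = I_t - I_p`, for `s ∈ {0,1,2}^n`:
`l(J_s) = -1 + ∑_{j=1}^n s_j (d_{j-1} - d_j)`. -/
noncomputable def Jl (a : ℕ → ℝ) (s : List ℕ) : ℝ :=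
  -1 + ∑ j ∈ Finset.range s.length, (s.getD j 0 : ℝ) * (dSeq a j - dSeq a (j + 1))

/-- Right endpoint of `J_s`: `r(J_s) = l(J_s) + 2 d_n`. -/
noncomputable def Jr (a : ℕ → ℝ) (s : List ℕ) : ℝ :=
  Jl a s + 2 * dSeq a s.length

/-- The interval `J_s`. -/
noncomputable def Jset (a : ℕ → ℝ) (s : List ℕ) : Set ℝ := Set.Icc (Jl a s) (Jr a s)

/-- Left endpoint of the gap `G^i_s` (`i = 0`: left gap, `i = 1`: right gap) of `J_s`. -/
noncomputable def Gl (a : ℕ → ℝ) (i : ℕ) (s : List ℕ) : ℝ :=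
  Jl a s + (i : ℝ) * (dSeq a s.length - dSeq a (s.length + 1)) + 2 * dSeq a (s.length + 1)

/-- Right endpoint of the gap `G^i_s`. -/
noncomputable def Gr (a : ℕ → ℝ) (i : ℕ) (s : List ℕ) : ℝ :=
  Jl a s + ((i : ℝ) + 1) * (dSeq a s.length - dSeq a (s.length + 1))

/-- The gap `G^i_s ⊆ J_s`, an open interval. -/
noncomputable def Gset (a : ℕ → ℝ) (i : ℕ) (s : List ℕ) : Set ℝ :=
  Set.Ioo (Gl a i s) (Gr a i s)

/-- `N(0,s) = max {j : s_j > 0}`, `N(1,s) = max {j : s_j < 2}` (1-based, `max ∅ = 0`). -/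
noncomputable def Nidx (i : ℕ) (s : List ℕ) : ℕ :=
  sSup {j | 1 ≤ j ∧ j ≤ s.length ∧
    (if i = 0 then 0 < s.getD (j - 1) 0 else s.getD (j - 1) 0 < 2)}

/-- The family `𝒢^{i0}_{s0}(n)` of (indices of) gaps of rank `n`, for
`s0 ∈ {0,1,2}^{k_m - 1}`; a gap `G^i_s` is coded by the pair `(i, s)`.
`𝒢^{i0}_{s0}(m) = {G^{i0}_{s0}}` and for `n > m`,
`𝒢^{i0}_{s0}(n)` consists of the gap `Ḡ^{i0}_{s0}(n)` together with the gaps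
`Ḡ^1_{t^j}(n)`, `Ḡ^0_{t^(j+1)}(n)` for all `G^j_t ∈ 𝒢^{i0}_{s0}(l)`, `m ≤ l < n`. -/
def gapFamily (k : ℕ → ℕ) (i0 : ℕ) (s0 : List ℕ) (m : ℕ) (n : ℕ) : Set (ℕ × List ℕ) :=
  if n ≤ m then {(i0, s0)}
  else
    {(i0, s0 ++ List.replicate (k n - k m) (2 * i0))} ∪
      ⋃ (l : ℕ) (_ : m ≤ l) (hl : l < n),
        ⋃ p ∈ gapFamily k i0 s0 m l,
          ({(1, p.2 ++ p.1 :: List.replicate (k n - k l - 1) 2),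
            (0, p.2 ++ (p.1 + 1) :: List.replicate (k n - k l - 1) 0)} : Set (ℕ × List ℕ))
termination_by n
decreasing_by exact hl

/-- The family `𝒢^{i0}_{s0} = ⋃_{n ≥ m} 𝒢^{i0}_{s0}(n)`. -/
def gapFamilyAll (k : ℕ → ℕ) (i0 : ℕ) (s0 : List ℕ) (m : ℕ) : Set (ℕ × List ℕ) :=
  ⋃ (n : ℕ) (_ : m ≤ n), gapFamily k i0 s0 m n

/-- The family `𝒢_t := 𝒢^0_{t ++ 0^{(k_m - |t| - 1)}} ∪ 𝒢^1_{t ++ 2^{(k_m - |t| - 1)}}`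
for `t ∈ {0,1,2}^k` with `k_{m-1} ≤ k < k_m`. -/
def gapFamilyT (k : ℕ → ℕ) (m : ℕ) (t : List ℕ) : Set (ℕ × List ℕ) :=
  gapFamilyAll k 0 (t ++ List.replicate (k m - t.length - 1) 0) m ∪
    gapFamilyAll k 1 (t ++ List.replicate (k m - t.length - 1) 2) m

/-- The union `⋃ 𝒢` of a family of (indices of) gaps, as a subset of `ℝ`. -/
noncomputable def gapUnion (a : ℕ → ℝ) (G : Set (ℕ × List ℕ)) : Set ℝ :=
  ⋃ p ∈ G, Gset a p.1 p.2

/-- `padSeq k c s m n` is the index of the gap `G^i(s,n)` (for `c = 2i`):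
`s ++ c^{(k_m - |s| - 1)} ++ 1 ++ c^{(k_{m+1} - k_m - 1)} ++ 1 ++ ⋯ ++ 1 ++ c^{(k_n - k_{n-1} - 1)}`. -/
def padSeq (k : ℕ → ℕ) (c : ℕ) (s : List ℕ) (m : ℕ) : ℕ → List ℕ
  | 0 => s ++ List.replicate (k m - s.length - 1) c
  | n + 1 =>
    if n + 1 ≤ m then s ++ List.replicate (k m - s.length - 1) c
    else padSeq k c s m n ++ 1 :: List.replicate (k (n + 1) - k n - 1) c

/-- `δ_n := min {3d_i - d_{i-1} : k_{n-1} + 1 ≤ i ≤ k_n - 1}` (as an element of `EReal`,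
so that `min ∅ = ⊤ = ∞`). -/
noncomputable def deltaMin (a : ℕ → ℝ) (k : ℕ → ℕ) (n : ℕ) : EReal :=
  sInf ((fun i => ((3 * dSeq a i - dSeq a (i - 1) : ℝ) : EReal)) ''
    (Set.Icc (k (n - 1) + 1) (k n - 1)))

/-- `Δ_n := max {3d_i - d_{i-1} : k_{n-1} + 1 ≤ i ≤ k_n - 1}` (`max ∅ = ⊥ = -∞`). -/
noncomputable def deltaMax (a : ℕ → ℝ) (k : ℕ → ℕ) (n : ℕ) : EReal :=
  sSup ((fun i => ((3 * dSeq a i - dSeq a (i - 1) : ℝ) : EReal)) ''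
    (Set.Icc (k (n - 1) + 1) (k n - 1)))

/-- `m_n := min { δ_n - (d_{k_n - 1} - d_{k_n}), 4 d_{k_n} - Δ_n }`. -/
noncomputable def mSeq (a : ℕ → ℝ) (k : ℕ → ℕ) (n : ℕ) : EReal :=
  min (deltaMin a k n - ((dSeq a (k n - 1) - dSeq a (k n) : ℝ) : EReal))
    (((4 * dSeq a (k n) : ℝ) : EReal) - deltaMax a k n)

/-- `∑_{i=n+1}^∞ (d_{k_i - 1} - d_{k_i})`. -/
noncomputable def tailSum (a : ℕ → ℝ) (k : ℕ → ℕ) (n : ℕ) : ℝ :=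
  ∑' i : ℕ, (dSeq a (k (n + 1 + i) - 1) - dSeq a (k (n + 1 + i)))

/-- Condition `(*)`: `m_n ≥ 2 ∑_{i=n+1}^∞ (d_{k_i - 1} - d_{k_i})` for every `n ∈ ℕ`. -/
def condStar (a : ℕ → ℝ) (k : ℕ → ℕ) : Prop :=
  ∀ n : ℕ, 1 ≤ n → ((2 * tailSum a k n : ℝ) : EReal) ≤ mSeq a k n

/-- `(k_n)_{n ≥ 1}` is the increasing enumeration of all indices greater than `k 0 = k₀`
at which `a` exceeds `1/3`. -/
def IsGapEnum (a : ℕ → ℝ) (k : ℕ → ℕ) : Prop :=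
  StrictMono k ∧ (∀ n, 1 ≤ n → k 0 < k n ∧ 1 / 3 < a (k n)) ∧
    (∀ j, k 0 < j → 1 / 3 < a j → ∃ n, 1 ≤ n ∧ k n = j)

/-- `G` is a gap of `E`: a bounded connected component of `ℝ ∖ E`. -/
def IsGapOf (E G : Set ℝ) : Prop :=
  (∃ x ∉ E, G = connectedComponentIn Eᶜ x) ∧ Bornology.IsBounded G

/-- `C` is a proper (nontrivial) connected component of `E`. -/
def IsProperComponentOf (E C : Set ℝ) : Prop :=
  (∃ x ∈ E, C = connectedComponentIn E x) ∧ C.Nontrivial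

/-- `E` is a Cantorval: a perfect set with infinitely many gaps such that both endpoints
of every gap are accumulated both by gaps and by proper components of `E`. -/
def IsCantorval (E : Set ℝ) : Prop :=
  Perfect E ∧ {G : Set ℝ | IsGapOf E G}.Infinite ∧
    ∀ G, IsGapOf E G → ∀ p, p = sInf G ∨ p = sSup G →
      (∀ ε > 0, ∃ G', IsGapOf E G' ∧ G' ≠ G ∧ G' ⊆ Set.Ioo (p - ε) (p + ε)) ∧
      (∀ ε > 0, ∃ C, IsProperComponentOf E C ∧ C ⊆ Set.Ioo (p - ε) (p + ε))

/-- `J_s` and `J_u` (of length `k_m - 1`) are associated: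
`N := N(0,s) = N(1,u) ∈ {k_{m-1}+1, …, k_m - 1}`, `s|(N-1) = u|(N-1)`, `u_N = s_N - 1`.
Then `J_u` is the interval covering `𝒢^0_s` and `J_s` is the interval covering `𝒢^1_u`. -/
def Associated (k : ℕ → ℕ) (m : ℕ) (s u : List ℕ) : Prop :=
  s.length = k m - 1 ∧ u.length = k m - 1 ∧
    Nidx 0 s = Nidx 1 u ∧
    k (m - 1) + 1 ≤ Nidx 0 s ∧ Nidx 0 s ≤ k m - 1 ∧
    s.take (Nidx 0 s - 1) = u.take (Nidx 0 s - 1) ∧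
    u.getD (Nidx 0 s - 1) 0 = s.getD (Nidx 0 s - 1) 0 - 1

/-- `G^i_g ⊂_* J_v`: the gap `G^i_g` is covered by the interval `J_v`, i.e. `G^i_g`
belongs to a family `𝒢^0_w` (resp. `𝒢^1_w`) such that `J_v` is the interval covering it. -/
def CoversGap (k : ℕ → ℕ) (i : ℕ) (g : List ℕ) (v : List ℕ) : Prop :=
  ∃ m w, 1 ≤ m ∧
    ((Associated k m w v ∧ (i, g) ∈ gapFamilyAll k 0 w m) ∨
      (Associated k m v w ∧ (i, g) ∈ gapFamilyAll k 1 w m))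

/-- The achievement set `E(x) = {∑_{j ∈ A} x_j : A ⊆ ℕ}` of a series (indexed from `1`). -/
def achievementSet (x : ℕ → ℝ) : Set ℝ :=
  {y | ∃ A : Set ℕ, A ⊆ {n | 1 ≤ n} ∧ HasSum (A.indicator x) y}

/-! ### Auxiliary lemmas -/

lemma dSeq_succ (a : ℕ → ℝ) (n : ℕ) : dSeq a (n + 1) = dSeq a n * ((1 - a (n + 1)) / 2) := by
  unfold dSeq
  rw [Finset.prod_Icc_succ_top (by omega : 1 ≤ n + 1)]

lemma dSeq_pos (a : ℕ → ℝ) (ha : ∀ n, 1 ≤ n → 0 < a n ∧ a n < 1) (n : ℕ) : 0 < dSeq a n := by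
  unfold dSeq
  apply Finset.prod_pos
  intro i hi
  have h := ha i (Finset.mem_Icc.mp hi).1
  linarith [h.2]

lemma dSeq_lt (a : ℕ → ℝ) (ha : ∀ n, 1 ≤ n → 0 < a n ∧ a n < 1) (n : ℕ) :
    dSeq a (n + 1) < dSeq a n := by
  have h := ha (n + 1) (by omega)
  have hp := dSeq_pos a ha n
  rw [dSeq_succ]
  nlinarith [h.1, h.2]

lemma dSeq_three (a : ℕ → ℝ) (ha : ∀ n, 1 ≤ n → 0 < a n ∧ a n < 1) (n : ℕ)
    (h3 : 1 / 3 < a (n + 1)) : 3 * dSeq a (n + 1) < dSeq a n := by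
  have hp := dSeq_pos a ha n
  rw [dSeq_succ]
  nlinarith

lemma Jl_concat (a : ℕ → ℝ) (w : List ℕ) (x : ℕ) :
    Jl a (w ++ [x]) = Jl a w + (x : ℝ) * (dSeq a w.length - dSeq a (w.length + 1)) := by
  unfold Jl
  have hlen : (w ++ [x]).length = w.length + 1 := by simp
  rw [hlen, Finset.sum_range_succ]
  have h1 : ∀ j ∈ Finset.range w.length,
      ((w ++ [x]).getD j 0 : ℝ) * (dSeq a j - dSeq a (j + 1)) =
        (w.getD j 0 : ℝ) * (dSeq a j - dSeq a (j + 1)) := by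
    intro j hj
    rw [List.getD_append _ _ _ _ (Finset.mem_range.mp hj)]
  rw [Finset.sum_congr rfl h1]
  have h2 : (w ++ [x]).getD w.length 0 = x := by
    rw [List.getD_append_right _ _ _ _ le_rfl]; simp
  rw [h2]; ring

lemma Jl_rep (a : ℕ → ℝ) (w : List ℕ) (c r : ℕ) :
    Jl a (w ++ List.replicate r c) =
      Jl a w + (c : ℝ) * (dSeq a w.length - dSeq a (w.length + r)) := by
  induction r with
  | zero => simp
  | succ r ih =>
    rw [List.replicate_succ', ← List.append_assoc, Jl_concat, ih]
    have h1 : (w ++ List.replicate r c).length = w.length + r := by simp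
    have h2 : w.length + (r + 1) = w.length + r + 1 := by omega
    rw [h1, h2]; ring

lemma Jl_cons_rep (a : ℕ → ℝ) (w : List ℕ) (x c r : ℕ) :
    Jl a (w ++ x :: List.replicate r c) =
      Jl a w + (x : ℝ) * (dSeq a w.length - dSeq a (w.length + 1)) +
        (c : ℝ) * (dSeq a (w.length + 1) - dSeq a (w.length + 1 + r)) := by
  rw [show w ++ x :: List.replicate r c = (w ++ [x]) ++ List.replicate r c by simp]
  rw [Jl_rep, Jl_concat]
  have h1 : (w ++ [x]).length = w.length + 1 := by simp
  rw [h1]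

lemma Gl_Gr_eq (a : ℕ → ℝ) (i : ℕ) (t : List ℕ) :
    Gr a i t = Gl a i t + (dSeq a t.length - 3 * dSeq a (t.length + 1)) := by
  unfold Gl Gr; ring

lemma Gl_succ (a : ℕ → ℝ) (j : ℕ) (t : List ℕ) :
    Gl a (j + 1) t = Gr a j t + 2 * dSeq a (t.length + 1) := by
  unfold Gl Gr; push_cast; ring

lemma Gl_lt_Gr (a : ℕ → ℝ) (ha : ∀ n, 1 ≤ n → 0 < a n ∧ a n < 1) (i : ℕ) (t : List ℕ)
    (h3 : 1 / 3 < a (t.length + 1)) : Gl a i t < Gr a i t := by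
  rw [Gl_Gr_eq]
  have := dSeq_three a ha t.length h3
  linarith

lemma Gl_cons_rep2 (a : ℕ → ℝ) (t : List ℕ) (j r M : ℕ) (hM : t.length + 1 + r = M) :
    Gl a 1 (t ++ j :: List.replicate r 2) = Gl a j t - (dSeq a M - dSeq a (M + 1)) := by
  have hlen : (t ++ j :: List.replicate r 2).length = M := by simp; omega
  unfold Gl
  rw [hlen, Jl_cons_rep, hM]
  push_cast; ring

lemma Gr_cons_rep2 (a : ℕ → ℝ) (t : List ℕ) (j r M : ℕ) (hM : t.length + 1 + r = M) :
    Gr a 1 (t ++ j :: List.replicate r 2) = Gl a j t - 2 * dSeq a (M + 1) := by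
  have hlen : (t ++ j :: List.replicate r 2).length = M := by simp; omega
  unfold Gl Gr
  rw [hlen, Jl_cons_rep, hM]
  push_cast; ring

lemma Gl_cons_rep0 (a : ℕ → ℝ) (t : List ℕ) (j r M : ℕ) (hM : t.length + 1 + r = M) :
    Gl a 0 (t ++ (j + 1) :: List.replicate r 0) = Gr a j t + 2 * dSeq a (M + 1) := by
  have hlen : (t ++ (j + 1) :: List.replicate r 0).length = M := by simp; omega
  unfold Gl Gr
  rw [hlen, Jl_cons_rep]
  push_cast; ring

lemma Gr_cons_rep0 (a : ℕ → ℝ) (t : List ℕ) (j r M : ℕ) (hM : t.length + 1 + r = M) :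
    Gr a 0 (t ++ (j + 1) :: List.replicate r 0) = Gr a j t + (dSeq a M - dSeq a (M + 1)) := by
  have hlen : (t ++ (j + 1) :: List.replicate r 0).length = M := by simp; omega
  unfold Gr
  rw [hlen, Jl_cons_rep]
  push_cast; ring

lemma Gl_rep2 (a : ℕ → ℝ) (t : List ℕ) (r M : ℕ) (hM : t.length + r = M) :
    Gl a 1 (t ++ List.replicate r 2) =
      Jl a t + 2 * dSeq a t.length - dSeq a M + dSeq a (M + 1) := by
  have hlen : (t ++ List.replicate r 2).length = M := by simp; omega
  unfold Gl
  rw [hlen, Jl_rep, hM]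
  push_cast; ring

lemma padSeq_base (k : ℕ → ℕ) (c : ℕ) (s0 : List ℕ) (m0 n : ℕ) (h : n ≤ m0) :
    padSeq k c s0 m0 n = s0 ++ List.replicate (k m0 - s0.length - 1) c := by
  cases n with
  | zero => rfl
  | succ n => rw [padSeq, if_pos h]

lemma padSeq_succ (k : ℕ → ℕ) (c : ℕ) (s0 : List ℕ) (m0 n : ℕ) (h : m0 < n + 1) :
    padSeq k c s0 m0 (n + 1) =
      padSeq k c s0 m0 n ++ 1 :: List.replicate (k (n + 1) - k n - 1) c := by
  rw [padSeq, if_neg (by omega)]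

lemma padSeq_length (k : ℕ → ℕ) (c : ℕ) (s0 : List ℕ) (m0 : ℕ) (hkmono : StrictMono k)
    (hs0 : s0.length + 1 ≤ k m0) :
    ∀ n, m0 ≤ n → (padSeq k c s0 m0 n).length = k n - 1 := by
  intro n hn
  induction n, hn using Nat.le_induction with
  | base =>
    rw [padSeq_base _ _ _ _ _ le_rfl]
    simp; omega
  | succ n hn ih =>
    rw [padSeq_succ _ _ _ _ _ (by omega)]
    have hlt : k n < k (n + 1) := hkmono (by omega)
    have h1 : k m0 ≤ k n := hkmono.monotone hn
    simp [ih]; omega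

lemma gapFamily_shape (k : ℕ → ℕ) (hkmono : StrictMono k) (s : List ℕ) (m : ℕ)
    (hk1 : 1 ≤ k m) (hslen : s.length = k m - 1) :
    ∀ n, m ≤ n → ∀ p ∈ gapFamily k 1 s m n, p.1 ≤ 1 ∧ p.2.length = k n - 1 := by
  intro n
  induction n using Nat.strong_induction_on with
  | _ n IH =>
    intro hn p hp
    by_cases h : n ≤ m
    · have hnm : n = m := le_antisymm h hn
      rw [gapFamily, if_pos h] at hp
      rw [Set.mem_singleton_iff] at hp
      subst hp hnm
      exact ⟨le_rfl, hslen⟩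
    · rw [gapFamily, if_neg h] at hp
      have hkmn : k m ≤ k n := hkmono.monotone hn
      rcases hp with hp | hp
      · rw [Set.mem_singleton_iff] at hp
        subst hp
        refine ⟨le_rfl, ?_⟩
        simp [hslen]; omega
      · simp only [Set.mem_iUnion] at hp
        obtain ⟨l, hml, hln, q, hq, hp⟩ := hp
        obtain ⟨hq1, hq2⟩ := IH l hln hml q hq
        have hkl : k l < k n := hkmono hln
        have hkl1 : 1 ≤ k l := le_trans hk1 (hkmono.monotone hml)
        rcases hp with hp | hp
        · subst hp
          refine ⟨le_rfl, ?_⟩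
          simp [hq2]; omega
        · rw [Set.mem_singleton_iff] at hp
          subst hp
          refine ⟨by norm_num, ?_⟩
          simp [hq2]; omega

/-- `ee a k n = d_{k_n - 1} - d_{k_n}`. -/
noncomputable def ee (a : ℕ → ℝ) (k : ℕ → ℕ) (n : ℕ) : ℝ :=
  dSeq a (k n - 1) - dSeq a (k n)

/-- `AA = l(G¹(s⌢2, n))`. -/
noncomputable def AA (a : ℕ → ℝ) (k : ℕ → ℕ) (s : List ℕ) (m n : ℕ) : ℝ :=
  Gl a 1 (padSeq k 2 (s ++ [2]) (m + 1) n)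

/-- `BB = l(G¹(s, n))`. -/
noncomputable def BB (a : ℕ → ℝ) (k : ℕ → ℕ) (s : List ℕ) (m n : ℕ) : ℝ :=
  Gl a 1 (padSeq k 2 s m n)

/-- `CC = r(G⁰(s⌢2, n))`. -/
noncomputable def CC (a : ℕ → ℝ) (k : ℕ → ℕ) (s : List ℕ) (m n : ℕ) : ℝ :=
  Gr a 0 (padSeq k 0 (s ++ [2]) (m + 1) n)

section ABC

variable (a : ℕ → ℝ) (k : ℕ → ℕ) (s : List ℕ) (m : ℕ)
variable (ha : ∀ n, 1 ≤ n → 0 < a n ∧ a n < 1) (hkmono : StrictMono k)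
  (hka : ∀ n, 1 ≤ n → 1 / 3 < a (k n)) (hk01 : ∀ n, 1 ≤ n → 1 ≤ k n)
  (hm : 1 ≤ m) (hslen : s.length = k m - 1)

include ha hk01 in
lemma ee_pos (n : ℕ) (hn : 1 ≤ n) : 0 < ee a k n := by
  have h1 : 1 ≤ k n := hk01 n hn
  have := dSeq_lt a ha (k n - 1)
  unfold ee
  rw [show k n - 1 + 1 = k n by omega] at this
  linarith

include ha hka hk01 in
lemma ee_gt (n : ℕ) (hn : 1 ≤ n) : 2 * dSeq a (k n) < ee a k n := by
  have h1 : 1 ≤ k n := hk01 n hn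
  have h3 : 1 / 3 < a (k n - 1 + 1) := by rw [show k n - 1 + 1 = k n by omega]; exact hka n hn
  have := dSeq_three a ha (k n - 1) h3
  unfold ee
  rw [show k n - 1 + 1 = k n by omega] at this
  linarith

include hkmono hk01 hm hslen in
lemma BB_base : BB a k s m m = Gl a 1 s := by
  have h1 : 1 ≤ k m := hk01 m hm
  unfold BB
  rw [padSeq_base _ _ _ _ _ le_rfl, show k m - s.length - 1 = 0 by omega]
  simp

include hkmono hk01 hm hslen in
lemma BB_rec (n : ℕ) (hn : m ≤ n) : BB a k s m (n + 1) = BB a k s m n - ee a k (n + 1) := by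
  have hkm : 1 ≤ k m := hk01 m hm
  have hlen := padSeq_length k 2 s m hkmono (by omega) n hn
  have hkn1 : 1 ≤ k n := le_trans hkm (hkmono.monotone hn)
  have hklt : k n < k (n + 1) := hkmono (by omega)
  unfold BB ee
  rw [padSeq_succ _ _ _ _ _ (by omega),
    Gl_cons_rep2 a _ 1 _ (k (n + 1) - 1) (by rw [hlen]; omega),
    show k (n + 1) - 1 + 1 = k (n + 1) by omega]

include hkmono hk01 hm hslen in
lemma AA_base : AA a k s m (m + 1) = Gl a 1 (s ++ List.replicate (k (m + 1) - k m) 2) := by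
  have hkm : 1 ≤ k m := hk01 m hm
  have hklt : k m < k (m + 1) := hkmono (by omega)
  unfold AA
  rw [padSeq_base _ _ _ _ _ le_rfl]
  have h1 : (s ++ [2]).length = k m := by simp; omega
  rw [h1, List.append_assoc]
  congr 1
  rw [show k (m + 1) - k m = (k (m + 1) - k m - 1) + 1 by omega, List.replicate_succ]
  rfl

include hkmono hk01 hm hslen in
lemma AA_rec (n : ℕ) (hn : m + 1 ≤ n) :
    AA a k s m (n + 1) = AA a k s m n - ee a k (n + 1) := by
  have hkm : 1 ≤ k m := hk01 m hm
  have hklt0 : k m < k (m + 1) := hkmono (by omega)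
  have hs1 : (s ++ [2]).length + 1 ≤ k (m + 1) := by simp; omega
  have hlen := padSeq_length k 2 (s ++ [2]) (m + 1) hkmono hs1 n hn
  have hkn1 : 1 ≤ k n := le_trans hkm (hkmono.monotone (by omega))
  have hklt : k n < k (n + 1) := hkmono (by omega)
  unfold AA ee
  rw [padSeq_succ _ _ _ _ _ (by omega),
    Gl_cons_rep2 a _ 1 _ (k (n + 1) - 1) (by rw [hlen]; omega),
    show k (n + 1) - 1 + 1 = k (n + 1) by omega]

include hkmono hk01 hm hslen in
lemma CC_base : CC a k s m (m + 1) = Gr a 1 s + ee a k (m + 1) := by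
  have hkm : 1 ≤ k m := hk01 m hm
  have hklt : k m < k (m + 1) := hkmono (by omega)
  unfold CC ee
  rw [padSeq_base _ _ _ _ _ le_rfl]
  have h1 : (s ++ [2]).length = k m := by simp; omega
  rw [h1, List.append_assoc]
  have h2 : [2] ++ List.replicate (k (m + 1) - k m - 1) 0
      = (1 + 1) :: List.replicate (k (m + 1) - k m - 1) 0 := rfl
  rw [h2, Gr_cons_rep0 a s 1 _ (k (m + 1) - 1) (by rw [hslen]; omega),
    show k (m + 1) - 1 + 1 = k (m + 1) by omega]

include hkmono hk01 hm hslen in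
lemma CC_rec (n : ℕ) (hn : m + 1 ≤ n) :
    CC a k s m (n + 1) = CC a k s m n + ee a k (n + 1) := by
  have hkm : 1 ≤ k m := hk01 m hm
  have hklt0 : k m < k (m + 1) := hkmono (by omega)
  have hs1 : (s ++ [2]).length + 1 ≤ k (m + 1) := by simp; omega
  have hlen := padSeq_length k 0 (s ++ [2]) (m + 1) hkmono hs1 n hn
  have hkn1 : 1 ≤ k n := le_trans hkm (hkmono.monotone (by omega))
  have hklt : k n < k (n + 1) := hkmono (by omega)
  unfold CC ee
  rw [padSeq_succ _ _ _ _ _ (by omega)]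
  have h2 : (1 : ℕ) :: List.replicate (k (n + 1) - k n - 1) 0
      = (0 + 1) :: List.replicate (k (n + 1) - k n - 1) 0 := rfl
  rw [h2, Gr_cons_rep0 a _ 0 _ (k (n + 1) - 1) (by rw [hlen]; omega),
    show k (n + 1) - 1 + 1 = k (n + 1) by omega]

include ha hkmono hk01 hm hslen in
lemma BB_step (l n : ℕ) (hl : m ≤ l) (hn : l < n) :
    BB a k s m n + ee a k n ≤ BB a k s m l := by
  have hn' : l + 1 ≤ n := hn
  induction n, hn' using Nat.le_induction with
  | base => rw [BB_rec a k s m hkmono hk01 hm hslen l hl]; linarith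
  | succ n hn ih =>
    have ih2 := ih (by omega)
    have he : 0 < ee a k n := ee_pos a k ha hk01 n (by omega)
    have := BB_rec a k s m hkmono hk01 hm hslen n (by omega)
    linarith

include ha hkmono hk01 hm hslen in
lemma AA_step (l n : ℕ) (hl : m + 1 ≤ l) (hn : l < n) :
    AA a k s m n + ee a k n ≤ AA a k s m l := by
  have hn' : l + 1 ≤ n := hn
  induction n, hn' using Nat.le_induction with
  | base => rw [AA_rec a k s m hkmono hk01 hm hslen l hl]; linarith
  | succ n hn ih =>
    have ih2 := ih (by omega)
    have he : 0 < ee a k n := ee_pos a k ha hk01 n (by omega)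
    have := AA_rec a k s m hkmono hk01 hm hslen n (by omega)
    linarith

include ha hkmono hk01 hm hslen in
lemma AA_mono (l n : ℕ) (hl : m + 1 ≤ l) (hn : l ≤ n) :
    AA a k s m n ≤ AA a k s m l := by
  rcases eq_or_lt_of_le hn with h | h
  · subst h; linarith
  · have h1 := AA_step a k s m ha hkmono hk01 hm hslen l n hl h
    have h2 := ee_pos a k ha hk01 n (by omega)
    linarith

include ha hkmono hk01 hm hslen in
lemma CC_step (l n : ℕ) (hl : m + 1 ≤ l) (hn : l < n) :
    CC a k s m l + ee a k n ≤ CC a k s m n := by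
  have hn' : l + 1 ≤ n := hn
  induction n, hn' using Nat.le_induction with
  | base => rw [CC_rec a k s m hkmono hk01 hm hslen l hl]
  | succ n hn ih =>
    have ih2 := ih (by omega)
    have he : 0 < ee a k n := ee_pos a k ha hk01 n (by omega)
    have := CC_rec a k s m hkmono hk01 hm hslen n (by omega)
    linarith

include ha hkmono hk01 hm hslen in
lemma CC_base' (n : ℕ) (hn : m < n) : Gr a 1 s + ee a k n ≤ CC a k s m n := by
  have hn' : m + 1 ≤ n := hn
  induction n, hn' using Nat.le_induction with
  | base => rw [CC_base a k s m hkmono hk01 hm hslen]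
  | succ n hn ih =>
    have ih2 : Gr a 1 s + ee a k n ≤ CC a k s m n := ih (by omega)
    have he : 0 < ee a k n := ee_pos a k ha hk01 n (by omega)
    have := CC_rec a k s m hkmono hk01 hm hslen n (by omega)
    linarith

include ha hkmono hk01 hm hslen in
lemma BB_base' (n : ℕ) (hn : m < n) : BB a k s m n + ee a k n ≤ Gl a 1 s := by
  have h := BB_step a k s m ha hkmono hk01 hm hslen m n le_rfl hn
  rw [BB_base a k s m hkmono hk01 hm hslen] at h
  exact h

include ha hkmono hk01 hm hslen in
lemma AA_le_R (n : ℕ) (hn : m + 1 ≤ n) :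
    AA a k s m n ≤ Jl a s + 2 * dSeq a s.length - dSeq a (k n - 1) + dSeq a (k n) := by
  induction n, hn using Nat.le_induction with
  | base =>
    have hkm : 1 ≤ k m := hk01 m hm
    have hklt : k m < k (m + 1) := hkmono (by omega)
    rw [AA_base a k s m hkmono hk01 hm hslen,
      Gl_rep2 a s _ (k (m + 1) - 1) (by rw [hslen]; omega),
      show k (m + 1) - 1 + 1 = k (m + 1) by omega]
  | succ n hn ih =>
    have ih2 := ih
    have hkm : 1 ≤ k m := hk01 m hm
    have he : 0 < ee a k n := ee_pos a k ha hk01 n (by omega)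
    have hrec := AA_rec a k s m hkmono hk01 hm hslen n hn
    unfold ee at he hrec
    linarith

end ABC

theorem gap_aux (a : ℕ → ℝ) (k : ℕ → ℕ)
    (ha : ∀ n, 1 ≤ n → 0 < a n ∧ a n < 1)
    (hkmono : StrictMono k)
    (hka : ∀ n, 1 ≤ n → 1 / 3 < a (k n))
    (hk01 : ∀ n, 1 ≤ n → 1 ≤ k n)
    (m : ℕ) (hm : 1 ≤ m) (s : List ℕ) (hslen : s.length = k m - 1) :
    ∀ n, m < n → ∀ p ∈ gapFamily k 1 s m n,
      AA a k s m n ≤ Gl a p.1 p.2 ∨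
        (BB a k s m n ≤ Gl a p.1 p.2 ∧ Gl a p.1 p.2 < Gr a p.1 p.2 ∧
          Gr a p.1 p.2 ≤ CC a k s m n) := by
  have hkm : 1 ≤ k m := hk01 m hm
  intro n
  induction n using Nat.strong_induction_on with
  | _ n IH =>
    intro hn p hp
    rw [gapFamily, if_neg (by omega)] at hp
    have hkmn : k m < k n := hkmono hn
    have hkn : 1 ≤ k n := by omega
    have heep : 0 < ee a k n := ee_pos a k ha hk01 n (by omega)
    have heeg : 2 * dSeq a (k n) < ee a k n := ee_gt a k ha hka hk01 n (by omega)
    have hdp : 0 < dSeq a (k n) := dSeq_pos a ha (k n)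
    rcases hp with hp | hp
    · -- the gap Ḡ¹ₛ(n) of rank n : first alternative
      rw [Set.mem_singleton_iff] at hp
      subst hp
      left
      dsimp only
      rw [Gl_rep2 a s _ (k n - 1) (by rw [hslen]; omega),
        show k n - 1 + 1 = k n by omega]
      exact AA_le_R a k s m ha hkmono hk01 hm hslen n hn
    · simp only [Set.mem_iUnion] at hp
      obtain ⟨l, hml, hln, q, hq, hp⟩ := hp
      obtain ⟨hq1, hq2⟩ := gapFamily_shape k hkmono s m hkm hslen l hml q hq
      have hkl : k l < k n := hkmono hln
      have hkl1 : 1 ≤ k l := le_trans hkm (hkmono.monotone hml)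
      -- the gap `G^{q.1}_{q.2}` is nonempty
      have hqlt : Gl a q.1 q.2 < Gr a q.1 q.2 := by
        apply Gl_lt_Gr a ha
        rw [show q.2.length + 1 = k l by omega]
        exact hka l (by omega)
      -- endpoints of the two new gaps
      have hM : q.2.length + 1 + (k n - k l - 1) = k n - 1 := by omega
      have e1l := Gl_cons_rep2 a q.2 q.1 (k n - k l - 1) (k n - 1) hM
      have e1r := Gr_cons_rep2 a q.2 q.1 (k n - k l - 1) (k n - 1) hM
      have e0l := Gl_cons_rep0 a q.2 q.1 (k n - k l - 1) (k n - 1) hM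
      have e0r := Gr_cons_rep0 a q.2 q.1 (k n - k l - 1) (k n - 1) hM
      rw [show k n - 1 + 1 = k n by omega] at e1l e1r e0l e0r
      have heeq : dSeq a (k n - 1) - dSeq a (k n) = ee a k n := rfl
      rw [heeq] at e1l e0r
      rcases eq_or_lt_of_le hml with hlm | hlm
      · -- l = m : the base gap, q = (1, s)
        have hqs : q = (1, s) := by
          rw [gapFamily, if_pos (le_of_eq hlm.symm)] at hq
          exact hq
        subst hqs
        have hBb := BB_base' a k s m ha hkmono hk01 hm hslen n hn
        have hCb := CC_base' a k s m ha hkmono hk01 hm hslen n hn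
        have hslt : Gl a 1 s < Gr a 1 s := by
          apply Gl_lt_Gr a ha
          rw [show s.length + 1 = k m by omega]
          exact hka m hm
        rcases hp with hp | hp
        · subst hp
          right
          dsimp only at e1l e1r ⊢
          rw [e1l, e1r]
          refine ⟨by linarith, by linarith, by linarith⟩
        · rw [Set.mem_singleton_iff] at hp
          subst hp
          right
          dsimp only at e0l e0r ⊢
          rw [e0l, e0r]
          refine ⟨by linarith, by linarith, by linarith⟩
      · -- m < l : use the induction hypothesis
        have hIH := IH l hln hlm q hq
        have hAs := AA_step a k s m ha hkmono hk01 hm hslen l n hlm hln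
        have hAm := AA_mono a k s m ha hkmono hk01 hm hslen l n hlm (le_of_lt hln)
        have hBs := BB_step a k s m ha hkmono hk01 hm hslen l n hml hln
        have hCs := CC_step a k s m ha hkmono hk01 hm hslen l n hlm hln
        rcases hp with hp | hp
        · subst hp
          dsimp only at e1l e1r ⊢
          rw [e1l, e1r]
          rcases hIH with hIH | ⟨h1, h2, h3⟩
          · left; linarith
          · right; refine ⟨by linarith, by linarith, by linarith⟩
        · rw [Set.mem_singleton_iff] at hp
          subst hp
          dsimp only at e0l e0r ⊢
          rw [e0l, e0r]
          rcases hIH with hIH | ⟨h1, h2, h3⟩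
          · left; linarith
          · right; refine ⟨by linarith, by linarith, by linarith⟩

/-- Lemma: for `s ∈ {0,1,2}^{k_m - 1}`, `n > m` and every gap `G = G^{p.1}_{p.2} ∈ 𝒢¹_s(n)`:
either `l(G) ≥ l(G¹(s⌢2, n))`, or `l(G¹(s, n)) ≤ l(G) < r(G) ≤ r(G⁰(s⌢2, n))`. -/
theorem gap_location_right_family (a : ℕ → ℝ) (k : ℕ → ℕ)
    (ha : ∀ n, 1 ≤ n → 0 < a n ∧ a n < 1)
    (hinf : {n : ℕ | 1 ≤ n ∧ 1 / 3 < a n}.Infinite)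
    (hk0 : a (k 0 + 1) < 1 / 3)
    (hk : IsGapEnum a k)
    (m : ℕ) (hm : 1 ≤ m)
    (s : List ℕ) (hs2 : ∀ x ∈ s, x ≤ 2) (hslen : s.length = k m - 1)
    (n : ℕ) (hn : m < n) :
    ∀ p ∈ gapFamily k 1 s m n,
      Gl a 1 (padSeq k 2 (s ++ [2]) (m + 1) n) ≤ Gl a p.1 p.2 ∨
        (Gl a 1 (padSeq k 2 s m n) ≤ Gl a p.1 p.2 ∧
          Gl a p.1 p.2 < Gr a p.1 p.2 ∧
          Gr a p.1 p.2 ≤ Gr a 0 (padSeq k 0 (s ++ [2]) (m + 1) n)) := by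
  have hkmono := hk.1
  have hka : ∀ n, 1 ≤ n → 1 / 3 < a (k n) := fun n hn => (hk.2.1 n hn).2
  have hk01 : ∀ n, 1 ≤ n → 1 ≤ k n := fun n hn => by have := (hk.2.1 n hn).1; omega
  exact gap_aux a k ha hkmono hka hk01 m hm s hslen n hn

end CCS
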